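/- The power series Ω(t) is transcendental over K̄(t): viewing K̄(t) as a subfield of the Laurent series field K̄_∞((t)) (via Laurent expansion at t = 0), Ω is not a root of any nonzero polynomial with coefficients in K̄(t). -/

import Mathlib

/-!
Common setup: the function field `K = 𝔽_q(θ)`, its completion
`K_∞ = 𝔽_q((1/θ))` at the infinite place (realized as Laurent series in the
variable `X = θ⁻¹`), a fixed algebraic closure `K̄_∞` of `K_∞`, the algebraic
closure `K̄` of `K` inside `K̄_∞`, the `∞`-adic absolute value, multizeta
values, Carlitz (multiple) polylogarithms and the Carlitz period `π̃`.
-/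

open Filter
open scoped Classical

noncomputable section

namespace MZV

/-- Unconditional (unordered) convergence of the sum of the family `f` to `L`,
with respect to an absolute-value function `v`. -/
def HasSumAbs {M ι : Type*} [AddCommGroup M] (v : M → ℝ) (f : ι → M) (L : M) : Prop :=
  ∀ ε : ℝ, 0 < ε → ∃ s : Finset ι, ∀ t : Finset ι, s ⊆ t → v (∑ i ∈ t, f i - L) < ε

/-- Convergence of a sequence to `L` with respect to an absolute-value
function `v`. -/
def TendstoAbs {M : Type*} [AddCommGroup M] (v : M → ℝ) (f : ℕ → M) (L : M) : Prop :=
  Tendsto (fun n => v (f n - L)) atTop (nhds 0)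

/-- The index set of "consecutive segments" `(ℓ, k)`, `0 ≤ ℓ ≤ k ≤ d - 1`
(in the notation of the paper, `I_d = {(i,j) : 1 ≤ j < i ≤ d+1}` via
`(ℓ, k) = (j - 1, i - 2)`); it has `d(d+1)/2` elements. -/
def Seg (d : ℕ) : Type := {p : ℕ × ℕ // p.1 ≤ p.2 ∧ p.2 < d}

/-- The segment `(x_ℓ, x_{ℓ+1}, …, x_k)` of a `d`-tuple `x`, for a segment
`s = (ℓ, k) ∈ Seg d`. -/
def segFam {γ : Type*} {d : ℕ} (x : Fin d → γ) (s : Seg d) :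
    Fin (s.1.2 - s.1.1 + 1) → γ :=
  fun i => x ⟨s.1.1 + i.1, by have h1 := i.2; have h2 := s.2.1; have h3 := s.2.2; omega⟩

/-- Index type for the sums defining multiple polylogarithms: strictly
decreasing tuples `i_1 > i_2 > ⋯ > i_m ≥ 0` of natural numbers. -/
def DecTuple (m : ℕ) : Type :=
  {i : Fin m → ℕ // ∀ a b : Fin m, a < b → i b < i a}

variable (Fq : Type) [Field Fq] [Fintype Fq]

/-- `q`, the cardinality of the constant field `𝔽_q`. -/
def q : ℕ := Fintype.card Fq

/-- `K_∞ = 𝔽_q((1/θ))`, realized as the field of Laurent series in the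
variable `X = θ⁻¹`.  The field `K = 𝔽_q(θ) = 𝔽_q(θ⁻¹)` is its subfield
`RatFunc 𝔽_q` (rational functions in `X = θ⁻¹`). -/
abbrev Kinf := LaurentSeries Fq

/-- The element `θ ∈ K_∞` (the inverse of the Laurent-series variable). -/
def theta : Kinf Fq := (HahnSeries.single (1 : ℤ) (1 : Fq))⁻¹

/-- The `∞`-adic absolute value on `K_∞`, normalized by `|θ|_∞ = q`. -/
def absK (f : Kinf Fq) : ℝ :=
  if f = 0 then 0 else (q Fq : ℝ) ^ (-(HahnSeries.order f))

/-- A fixed algebraic closure `K̄_∞` of `K_∞`. -/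
abbrev Kbinf := AlgebraicClosure (Kinf Fq)

instance : Algebra (RatFunc Fq) (Kbinf Fq) :=
  ((algebraMap (Kinf Fq) (Kbinf Fq)).comp (@algebraMap (RatFunc Fq) (Kinf Fq) _ _ (RatFunc.liftAlgebra Fq (Kinf Fq)))).toAlgebra

/-- `K̄`, the algebraic closure of `K = 𝔽_q(θ)` inside `K̄_∞` (the elements of
`K̄_∞` algebraic, equivalently integral, over `K`). -/
def Kbar : Subalgebra (RatFunc Fq) (Kbinf Fq) := integralClosure (RatFunc Fq) (Kbinf Fq)

/-- `θ` viewed inside `K̄_∞`. -/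
def thetaB : Kbinf Fq := algebraMap (Kinf Fq) (Kbinf Fq) (theta Fq)

/-- The `N`-th partial product of
`∏_{i=1}^∞ (1 − θ^{1−q^i})⁻¹ ∈ K_∞`; its limit `P` enters the Carlitz period
`π̃ = (−θ)^{q/(q−1)} · P`. -/
def piTildePartial (N : ℕ) : Kinf Fq :=
  ∏ i ∈ Finset.range N, (1 - theta Fq ^ ((1 : ℤ) - (q Fq : ℤ) ^ (i + 1)))⁻¹

/-- Index type for multizeta sums: `m`-tuples of monic polynomials in
`𝔽_q[θ]` with strictly decreasing degrees, `deg a_1 > ⋯ > deg a_m ≥ 0`. -/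
def MonicDec (m : ℕ) : Type :=
  {a : Fin m → Polynomial Fq //
    (∀ i, (a i).Monic) ∧ ∀ i j : Fin m, i < j → (a j).degree < (a i).degree}

/-- The term `1/(a_1(θ)^{n_1} ⋯ a_m(θ)^{n_m})` of the multizeta sum. -/
def mzvTerm (m : ℕ) (nn : Fin m → ℕ) (a : MonicDec Fq m) : Kinf Fq :=
  (∏ i, Polynomial.aeval (theta Fq) (a.1 i) ^ nn i)⁻¹

/-- `z = ζ(n_1, …, n_m)`: the multizeta value, an unconditionally convergent
sum in `K_∞`. -/
def IsMZV (m : ℕ) (nn : Fin m → ℕ) (z : Kinf Fq) : Prop :=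
  HasSumAbs (absK Fq) (mzvTerm Fq m nn) z

/-- `D_i = (θ − θ^q)(θ − θ^{q²}) ⋯ (θ − θ^{q^i}) ∈ K_∞`. -/
def Dfac (i : ℕ) : Kinf Fq :=
  ∏ s ∈ Finset.range i, (theta Fq - theta Fq ^ (q Fq) ^ (s + 1))

/-- The term `z_1^{q^{i_1}} ⋯ z_m^{q^{i_m}} / (D_{i_1}^{n_1} ⋯ D_{i_m}^{n_m})`
of the Carlitz multiple polylogarithm (for points of `K_∞`). -/
def cmplTerm (m : ℕ) (nn : Fin m → ℕ) (z : Fin m → Kinf Fq) (ii : DecTuple m) : Kinf Fq :=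
  ∏ j, (z j ^ (q Fq) ^ (ii.1 j) * ((Dfac Fq (ii.1 j)) ^ nn j)⁻¹)

/-- `L = Li_{n_1, …, n_m}(z_1, …, z_m)`, the value of the Carlitz multiple
polylogarithm at a point of `K_∞^m` (an unconditionally convergent sum in
`K_∞`). -/
def IsCMPL (m : ℕ) (nn : Fin m → ℕ) (z : Fin m → Kinf Fq) (L : Kinf Fq) : Prop :=
  HasSumAbs (absK Fq) (cmplTerm Fq m nn z) L

/-- The value `u^{(i)}(c) = Σ_j (coeff j of u)^{q^i} c^j` of the `i`-fold twist
of a polynomial `u`. -/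
def twistEval (u : Polynomial (Kbinf Fq)) (i : ℕ) (c : Kbinf Fq) : Kbinf Fq :=
  ∑ j ∈ Finset.range (u.natDegree + 1), u.coeff j ^ (q Fq) ^ i * c ^ j

/-- `(c − θ^q)(c − θ^{q²}) ⋯ (c − θ^{q^i}) ∈ K̄_∞`. -/
def DfacC (c : Kbinf Fq) (i : ℕ) : Kbinf Fq :=
  ∏ s ∈ Finset.range i, (c - thetaB Fq ^ (q Fq) ^ (s + 1))

/-- The term (at `t = c`) of the series `L_{𝕦,𝕟}`:
`u_1^{(i_1)}(c) ⋯ u_m^{(i_m)}(c) / (((c−θ^q)⋯(c−θ^{q^{i_1}}))^{n_1} ⋯ ((c−θ^q)⋯(c−θ^{q^{i_m}}))^{n_m})`. -/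
def LTermC (m : ℕ) (nn : Fin m → ℕ) (uu : Fin m → Polynomial (Kbinf Fq)) (c : Kbinf Fq)
    (ii : DecTuple m) : Kbinf Fq :=
  ∏ j, (twistEval Fq (uu j) (ii.1 j) c * ((DfacC Fq c (ii.1 j)) ^ nn j)⁻¹)

end MZV

namespace MZV

variable (Fq : Type) [Field Fq] [Fintype Fq]

/-- The `N`-th partial product of
`Ω(t) = (−θ)^{−q/(q−1)} ∏_{i=1}^∞ (1 − t/θ^{q^i}) ∈ K̄_∞[[t]]`, given the
chosen root `β = (−θ)^{1/(q−1)}` (so that `(−θ)^{−q/(q−1)} = (β^q)⁻¹`). -/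
def OmegaPartial (β : Kbinf Fq) (N : ℕ) : PowerSeries (Kbinf Fq) :=
  PowerSeries.C (β ^ q Fq)⁻¹ *
    ∏ i ∈ Finset.range N,
      (1 - PowerSeries.C ((thetaB Fq ^ (q Fq) ^ (i + 1))⁻¹) * PowerSeries.X)

/-- The field `K̄(t)`, viewed as the subfield of the Laurent series field
`K̄_∞((t))` generated by the constants from `K̄` and the variable `t`. -/
def KbarT : Subfield (LaurentSeries (Kbinf Fq)) :=
  Subfield.closure
    (((HahnSeries.C : Kbinf Fq →+* LaurentSeries (Kbinf Fq)) ''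
        (Kbar Fq : Set (Kbinf Fq))) ∪
      {HahnSeries.single (1 : ℤ) (1 : Kbinf Fq)})

instance : Algebra (KbarT Fq) (LaurentSeries (Kbinf Fq)) :=
  (KbarT Fq).subtype.toAlgebra

end MZV

/-!
The partial products satisfy `Ω_{N+1} = (t - θ^q) Ω_N^{(1)}`, where `f^{(1)}` raises every
coefficient of `f` to the `q`-th power; passing to the limit gives `Ω = (t - θ^q) Ω^{(1)}`.
The twist preserves `K̄(t)`. If `Ω` were algebraic over `K̄(t)` with minimal polynomial `m` of
degree `d > 0`, twisting `m` and scaling its roots by `t - θ^q` would give a monic polynomial of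
degree `d` vanishing at `Ω`, i.e. `m` itself. Comparing constant terms yields a rational function
`f = P/Q ≠ 0` with `f^{(1)} (t - θ^q)^d = f`, and comparing the degrees of
`P^{(1)} (t - θ^q)^d Q = P Q^{(1)}` forces `d = 0`.
-/

open Topology
open scoped LaurentSeries Polynomial

namespace HahnSeries

variable {Γ R S : Type*} [AddCommMonoid Γ] [PartialOrder Γ] [IsOrderedCancelAddMonoid Γ]
  [Semiring R] [Semiring S]

def mapRingHom (φ : R →+* S) : HahnSeries Γ R →+* HahnSeries Γ S where
  toFun x := x.map φ
  map_one' := HahnSeries.map_one φ.toMonoidWithZeroHom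
  map_mul' _ _ := HahnSeries.map_mul φ.toNonUnitalRingHom
  map_zero' := by ext; simp
  map_add' _ _ := by ext; simp

@[simp] lemma coeff_mapRingHom (φ : R →+* S) (x : HahnSeries Γ R) (g : Γ) :
    (mapRingHom φ x).coeff g = φ (x.coeff g) := rfl

lemma mapRingHom_C (φ : R →+* S) (a : R) : mapRingHom φ (C a : HahnSeries Γ R) = C (φ a) :=
  map_C a φ

lemma mapRingHom_single (φ : R →+* S) (g : Γ) (a : R) :
    mapRingHom φ (single g a) = single g (φ a) :=
  HahnSeries.map_single (φ : R →+ S).toZeroHom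

end HahnSeries

namespace Polynomial

variable {K : Type*} [Field K]

theorem eq_zero_of_map_mul_X_sub_C_pow_mul_eq (φ : K →+* K) {P Q : K[X]} (hP : P ≠ 0)
    (hQ : Q ≠ 0) {c : K} {d : ℕ} (h : P.map φ * (X - C c) ^ d * Q = P * Q.map φ) : d = 0 := by
  have hPφ : P.map φ ≠ 0 := map_ne_zero hP
  have hdeg := congrArg natDegree h
  rw [natDegree_mul (mul_ne_zero hPφ (pow_ne_zero _ (X_sub_C_ne_zero c))) hQ,
    natDegree_mul hPφ (pow_ne_zero _ (X_sub_C_ne_zero c)), natDegree_mul hP (map_ne_zero hQ),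
    natDegree_pow, natDegree_map, natDegree_map, natDegree_X_sub_C] at hdeg
  omega

end Polynomial

namespace LaurentSeries

open HahnSeries

variable {R S : Type*} [CommSemiring R] [CommSemiring S]

lemma mapRingHom_ofPowerSeries (φ : R →+* S) (f : PowerSeries R) :
    mapRingHom φ (ofPowerSeries ℤ R f) = ofPowerSeries ℤ S (PowerSeries.map φ f) := by
  ext i
  simp only [coeff_mapRingHom, PowerSeries.coeff_coe, PowerSeries.coeff_map, apply_ite φ, map_zero]

lemma mapRingHom_algebraMap_polynomial (φ : R →+* S) (P : R[X]) :
    mapRingHom φ (algebraMap R[X] R⸨X⸩ P) = algebraMap S[X] S⸨X⸩ (P.map φ) := by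
  rw [Polynomial.algebraMap_hahnSeries_apply, Polynomial.algebraMap_hahnSeries_apply,
    mapRingHom_ofPowerSeries]
  congr 1
  ext n
  simp [Polynomial.coeff_coe]

variable {K : Type*} [Field K]

open scoped RatFunc in
theorem eq_zero_of_mapRingHom_mul_pow_eq (φ : K →+* K) (c : K) {d : ℕ} (hd : 0 < d)
    {x : K⸨X⸩} (hx : x ∈ (algebraMap (RatFunc K) K⸨X⸩).fieldRange)
    (h : mapRingHom φ x * (single 1 1 - HahnSeries.C c) ^ d = x) : x = 0 := by
  obtain ⟨f, rfl⟩ := hx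
  rw [← RatFunc.num_div_denom f, RatFunc.algebraMap_apply_div] at h ⊢
  set P := f.num
  set Q := f.denom
  have hQ : Q ≠ 0 := f.denom_ne_zero
  have hinj := Polynomial.algebraMap_hahnSeries_injective (R := K) ℤ
  have hX : single (1 : ℤ) (1 : K) - HahnSeries.C c =
      algebraMap K[X] K⸨X⸩ (Polynomial.X - Polynomial.C c) := by
    simp
  by_contra hx
  have hP : P ≠ 0 := by rintro hP; simp [hP] at hx
  have hQ' : algebraMap K[X] K⸨X⸩ Q ≠ 0 := by simpa using hinj.ne hQ
  have hQφ : algebraMap K[X] K⸨X⸩ (Q.map φ) ≠ 0 := by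
    simpa using hinj.ne (Polynomial.map_ne_zero hQ)
  rw [map_div₀, mapRingHom_algebraMap_polynomial, mapRingHom_algebraMap_polynomial, hX,
    div_mul_eq_mul_div, div_eq_div_iff hQφ hQ', ← map_pow, ← map_mul, ← map_mul, ← map_mul] at h
  exact hd.ne' (Polynomial.eq_zero_of_map_mul_X_sub_C_pow_mul_eq φ hP hQ (hinj h))

end LaurentSeries

open Polynomial in
theorem exists_ne_zero_map_mul_pow_eq_of_isAlgebraic {F L : Type*} [Field F] [Field L]
    [Algebra F L] (σ : F →+* F) (τ : L →+* L)
    (hστ : ∀ a, τ (algebraMap F L a) = algebraMap F L (σ a)) {u : F} {ω : L} (hω0 : ω ≠ 0)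
    (hω : algebraMap F L u * τ ω = ω) (halg : IsAlgebraic F ω) :
    ∃ a : F, a ≠ 0 ∧ ∃ d, 0 < d ∧ σ a * u ^ d = a := by
  have hint := halg.isIntegral
  set m := minpoly F ω
  have hτω : aeval (τ ω) (m.map σ) = 0 := by
    have hcomp : (algebraMap F L).comp σ = τ.comp (algebraMap F L) := by ext a; exact (hστ a).symm
    rw [aeval_def, eval₂_map, hcomp, ← hom_eval₂, ← aeval_def, minpoly.aeval, map_zero]
  -- scaling the roots by `u` turns the root `τ ω` into the root `u * τ ω = ω`
  have hscale : (m.map σ).scaleRoots u = m := by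
    have hmon : ((m.map σ).scaleRoots u).Monic :=
      (monic_scaleRoots_iff u).2 ((minpoly.monic hint).map σ)
    have hω' : aeval ω ((m.map σ).scaleRoots u) = 0 := by
      simpa [hω] using scaleRoots_aeval_eq_zero (r := u) hτω
    refine minpoly.unique _ _ hmon hω' fun p hp hp0 => ?_
    rw [degree_eq_natDegree hmon.ne_zero, natDegree_scaleRoots, natDegree_map,
      ← degree_eq_natDegree (minpoly.ne_zero hint)]
    exact minpoly.min _ _ hp hp0
  refine ⟨m.coeff 0, minpoly.coeff_zero_ne_zero hint hω0, m.natDegree,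
    minpoly.natDegree_pos hint, ?_⟩
  simpa [coeff_scaleRoots] using congrArg (coeff · 0) hscale

namespace MZV

open HahnSeries

variable {Fq : Type} [Field Fq]

lemma thetaB_ne_zero : thetaB Fq ≠ 0 :=
  (_root_.map_ne_zero _).2 (inv_ne_zero (single_ne_zero one_ne_zero))

lemma thetaB_mem_Kbar : thetaB Fq ∈ Kbar Fq := by
  have h : thetaB Fq = algebraMap (RatFunc Fq) (Kbinf Fq) RatFunc.X⁻¹ := by
    rw [thetaB, theta, ← RatFunc.coe_X, ← map_inv₀]
    rfl
  rw [h]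
  exact isIntegral_algebraMap

open scoped RatFunc in
lemma KbarT_le_fieldRange :
    KbarT Fq ≤ (algebraMap (RatFunc (Kbinf Fq)) (LaurentSeries (Kbinf Fq))).fieldRange := by
  refine Subfield.closure_le.2 (Set.union_subset ?_ ?_)
  · rintro _ ⟨a, -, rfl⟩
    refine ⟨algebraMap _ _ (Polynomial.C a), ?_⟩
    rw [← IsScalarTower.algebraMap_apply]
    simp
  · rintro _ rfl
    exact ⟨RatFunc.X, RatFunc.coe_X⟩

lemma single_one_sub_C_mem_KbarT {a : Kbinf Fq} (ha : a ∈ Kbar Fq) :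
    single 1 1 - HahnSeries.C a ∈ KbarT Fq :=
  sub_mem (Subfield.subset_closure (Or.inr rfl)) (Subfield.subset_closure (Or.inl ⟨a, ha, rfl⟩))

lemma mapRingHom_mem_KbarT {φ : Kbinf Fq →+* Kbinf Fq}
    (hφ : ∀ a ∈ Kbar Fq, φ a ∈ Kbar Fq)
    {x : LaurentSeries (Kbinf Fq)} (hx : x ∈ KbarT Fq) : mapRingHom φ x ∈ KbarT Fq := by
  suffices KbarT Fq ≤ (KbarT Fq).comap (mapRingHom φ) from this hx
  refine Subfield.closure_le.2 (Set.union_subset ?_ ?_)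
  · rintro _ ⟨a, ha, rfl⟩
    exact Subfield.subset_closure (Or.inl ⟨φ a, hφ a ha, (mapRingHom_C φ a).symm⟩)
  · rintro _ rfl
    exact Subfield.subset_closure (Or.inr (by simp [mapRingHom_single]))

end MZV

lemma WithAbs.tendsto_toAbs_iff {K : Type*} [Field K] (v : AbsoluteValue K ℝ) {a : ℕ → K}
    {b : K} : Tendsto (fun N => toAbs v (a N)) atTop (𝓝 (toAbs v b)) ↔
      Tendsto (fun N => v (a N - b)) atTop (𝓝 0) := by
  rw [tendsto_iff_norm_sub_tendsto_zero]
  rfl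

namespace PowerSeries

variable {K : Type*} [Field K] (v : AbsoluteValue K ℝ)

theorem X_sub_C_mul_map_eq_of_tendsto {n : ℕ} (φ : K →+* K) (hφ : ∀ x, φ x = x ^ n) (c : K)
    {f : ℕ → PowerSeries K} {g : PowerSeries K}
    (hf : ∀ N, (X - C c) * map φ (f N) = f (N + 1))
    (hg : ∀ k, Tendsto (fun N => v (coeff k (f N) - coeff k g)) atTop (𝓝 0)) :
    (X - C c) * map φ g = g := by
  have hlim (k : ℕ) : Tendsto (fun N => WithAbs.toAbs v (coeff k (f N))) atTop
      (𝓝 (WithAbs.toAbs v (coeff k g))) := (WithAbs.tendsto_toAbs_iff v).2 (hg k)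
  ext k
  apply WithAbs.toAbs_injective v
  refine tendsto_nhds_unique ?_ ((hlim k).comp (tendsto_add_atTop_nat 1))
  simp only [Function.comp_def, ← hf]
  rcases k with _ | k
  · simp only [sub_mul, map_sub, coeff_zero_X_mul, coeff_C_mul, coeff_map, hφ, WithAbs.toAbs_sub,
      WithAbs.toAbs_mul, WithAbs.toAbs_pow, WithAbs.toAbs_zero]
    exact tendsto_const_nhds.sub (((hlim 0).pow n).const_mul _)
  · simp only [sub_mul, map_sub, coeff_succ_X_mul, coeff_C_mul, coeff_map, hφ, WithAbs.toAbs_sub,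
      WithAbs.toAbs_mul, WithAbs.toAbs_pow]
    exact ((hlim k).pow n).sub (((hlim (k + 1)).pow n).const_mul _)

end PowerSeries

namespace MZV

open PowerSeries

variable {Fq : Type} [Field Fq] [Fintype Fq]

lemma ne_zero_of_pow_eq_neg_thetaB {β : Kbinf Fq} (hβ : β ^ (q Fq - 1) = -thetaB Fq) :
    β ≠ 0 := by
  have hq : 1 < q Fq := Fintype.one_lt_card
  rintro rfl
  rw [zero_pow (by omega), eq_comm, neg_eq_zero] at hβ
  exact thetaB_ne_zero hβ

lemma coeff_zero_OmegaPartial (β : Kbinf Fq) (N : ℕ) :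
    coeff 0 (OmegaPartial Fq β N) = (β ^ q Fq)⁻¹ := by
  simp [OmegaPartial, coeff_zero_eq_constantCoeff, map_prod]

lemma ne_zero_of_tendsto_coeff_zero_OmegaPartial (v : AbsoluteValue (Kbinf Fq) ℝ)
    {β : Kbinf Fq} (hβ : β ^ (q Fq - 1) = -thetaB Fq) {Ω : PowerSeries (Kbinf Fq)}
    (hΩ : Tendsto (fun N => v (coeff 0 (OmegaPartial Fq β N) - coeff 0 Ω)) atTop (𝓝 0)) :
    Ω ≠ 0 := by
  rintro rfl
  simp only [coeff_zero_OmegaPartial, map_zero, sub_zero, tendsto_const_nhds_iff,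
    AbsoluteValue.eq_zero, _root_.inv_eq_zero] at hΩ
  exact ne_zero_of_pow_eq_neg_thetaB hβ (pow_eq_zero_iff Fintype.card_ne_zero |>.1 hΩ)

lemma X_sub_C_mul_map_OmegaPartial {φ : Kbinf Fq →+* Kbinf Fq} (hφ : ∀ x, φ x = x ^ q Fq)
    {β : Kbinf Fq} (hβ : β ^ (q Fq - 1) = -thetaB Fq) (N : ℕ) :
    (X - C (thetaB Fq ^ q Fq)) * map φ (OmegaPartial Fq β N) = OmegaPartial Fq β (N + 1) := by
  simp only [OmegaPartial]
  set θ := thetaB Fq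
  have hq : q Fq ≠ 0 := Fintype.card_ne_zero
  have hφβ : φ (β ^ q Fq) = θ ^ q Fq * -β ^ q Fq := by
    rw [hφ, ← pow_sub_one_mul hq (β ^ q Fq), pow_right_comm, hβ, ← hφ, map_neg, hφ]
    ring
  have hφθ (i : ℕ) : φ (θ ^ q Fq ^ (i + 1)) = θ ^ q Fq ^ (i + 2) := by
    rw [hφ, ← pow_mul, ← pow_succ]
  have hCθ : C (θ ^ q Fq) * C (θ ^ q Fq)⁻¹ = 1 := by
    rw [← map_mul, mul_inv_cancel₀ (pow_ne_zero _ thetaB_ne_zero), map_one]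
  simp only [map_mul, map_C, map_prod, map_sub, map_one, map_X, map_inv₀, hφθ, map_neg,
    hφβ, mul_inv, inv_neg, Finset.prod_range_succ' _ N, zero_add, pow_one]
  linear_combination (C (β ^ q Fq)⁻¹ *
    ∏ i ∈ Finset.range N, (1 - C (θ ^ q Fq ^ (i + 2))⁻¹ * X)) * hCθ

end MZV

open MZV PowerSeries in
theorem statement13_general (Fq : Type) [Field Fq] [Fintype Fq]
    -- `v` is the unique extension of the `∞`-adic absolute value to `K̄_∞`
    (v : AbsoluteValue (Kbinf Fq) ℝ)
    -- `β = (−θ)^{1/(q−1)}`, a fixed `(q−1)`-st root of `−θ` in `K̄_∞`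
    (β : Kbinf Fq) (hβ : β ^ (q Fq - 1) = - thetaB Fq)
    -- `Ω`, the coefficientwise limit of the partial products
    (Ω : PowerSeries (Kbinf Fq))
    (hΩ : ∀ k : ℕ, Tendsto
      (fun N => v (PowerSeries.coeff k (OmegaPartial Fq β N) -
        PowerSeries.coeff k Ω)) atTop (nhds 0)) :
    Transcendental ↥(KbarT Fq) ((HahnSeries.ofPowerSeries ℤ (Kbinf Fq)) Ω) := by
  let φ : Kbinf Fq →+* Kbinf Fq := FiniteField.frobeniusAlgHom Fq (Kbinf Fq)
  have hφ (x : Kbinf Fq) : φ x = x ^ q Fq := rfl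
  have hfun : (X - C (thetaB Fq ^ q Fq)) * map φ Ω = Ω :=
    X_sub_C_mul_map_eq_of_tendsto v φ hφ _ (X_sub_C_mul_map_OmegaPartial hφ hβ) hΩ
  have hΩ0 : Ω ≠ 0 := ne_zero_of_tendsto_coeff_zero_OmegaPartial v hβ (hΩ 0)
  let σ : KbarT Fq →+* KbarT Fq :=
    ((HahnSeries.mapRingHom φ).comp (KbarT Fq).subtype).codRestrict _
      fun a => mapRingHom_mem_KbarT (fun _ hb => pow_mem hb _) a.2
  have hu := single_one_sub_C_mem_KbarT (pow_mem (thetaB_mem_Kbar (Fq := Fq)) (q Fq))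
  intro halg
  obtain ⟨a, ha0, d, hd, ha⟩ := exists_ne_zero_map_mul_pow_eq_of_isAlgebraic σ
    (HahnSeries.mapRingHom φ) (fun _ => rfl) (u := ⟨_, hu⟩)
    ((map_ne_zero_iff _ HahnSeries.ofPowerSeries_injective).2 hΩ0) (by
      conv_rhs => rw [← hfun]
      rw [LaurentSeries.mapRingHom_ofPowerSeries, map_mul, map_sub, HahnSeries.ofPowerSeries_X,
        HahnSeries.ofPowerSeries_C]
      rfl) halg
  exact ha0 (Subtype.ext (LaurentSeries.eq_zero_of_mapRingHom_mul_pow_eq φ _ hd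
    (KbarT_le_fieldRange a.2) (congrArg Subtype.val ha)))

open MZV in
/-- The power series `Ω(t)` is transcendental over `K̄(t)`:
viewing `K̄(t)` as a subfield of the Laurent series field `K̄_∞((t))` (via
Laurent expansion at `t = 0`), `Ω` is not a root of any nonzero polynomial
with coefficients in `K̄(t)`. -/
theorem statement13 (Fq : Type) [Field Fq] [Fintype Fq]
    -- `v` is the unique extension of the `∞`-adic absolute value to `K̄_∞`
    (v : AbsoluteValue (Kbinf Fq) ℝ)
    (hv : ∀ x : Kinf Fq, v (algebraMap (Kinf Fq) (Kbinf Fq) x) = absK Fq x)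
    -- `β = (−θ)^{1/(q−1)}`, a fixed `(q−1)`-st root of `−θ` in `K̄_∞`
    (β : Kbinf Fq) (hβ : β ^ (q Fq - 1) = - thetaB Fq)
    -- `Ω`, the coefficientwise limit of the partial products
    (Ω : PowerSeries (Kbinf Fq))
    (hΩ : ∀ k : ℕ, Tendsto
      (fun N => v (PowerSeries.coeff k (OmegaPartial Fq β N) -
        PowerSeries.coeff k Ω)) atTop (nhds 0)) :
    Transcendental ↥(KbarT Fq) ((HahnSeries.ofPowerSeries ℤ (Kbinf Fq)) Ω) :=
  statement13_general Fq v β hβ Ω hΩ
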